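/- Let f be a non-negative convex function on the triangle Δ = {(x,y) : x ≥ 0, y ≥ 0, x/a + y/b ≤ 1} such that the functions x ↦ f(x,0) and y ↦ f(0,y) are non-increasing. Then there exists a constant C, independent of a and b, such that (∫_Δ f² dμ)^{1/2} ≤ C (∫₀^a f(x,0) dx + ∫₀^b f(0,y) dy + √(ab) · max{f(a,0), f(0,b)}). -/

import Mathlib

open MeasureTheory Set

/-!
Write `M = max (f (a, 0)) (f (0, b))`, so that `f ≤ M` on the hypotenuse by convexity. A point
`(x, y)` of the triangle lies on the vertical segment from `(x, 0)` to the hypotenuse and on the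
horizontal segment from `(0, y)` to it, so `f (x, y) ≤ max (f (x, 0)) M` and
`f (x, y) ≤ max (f (0, y)) M`; hence `f (x, y) ^ 2 ≤ f (x, 0) * f (0, y) + M ^ 2`. Integrating this
over the rectangle `[0, a] × [0, b]` containing the triangle separates the variables:
`∫ f ^ 2 ≤ A * B + M ^ 2 * a * b ≤ (A + B + √(a b) M) ^ 2`, where `A`, `B` are the integrals along
the legs. So `C = 1` works.
-/

def triangle (a b : ℝ) : Set (ℝ × ℝ) := {p | 0 ≤ p.1 ∧ 0 ≤ p.2 ∧ p.1 / a + p.2 / b ≤ 1}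

variable {a b : ℝ}

theorem mk_zero_mem_triangle (ha : 0 < a) {x : ℝ} (hx : x ∈ Icc 0 a) : (x, 0) ∈ triangle a b := by
  simpa [triangle, div_le_one ha] using hx

theorem zero_mk_mem_triangle (hb : 0 < b) {y : ℝ} (hy : y ∈ Icc 0 b) : (0, y) ∈ triangle a b := by
  simpa [triangle, div_le_one hb] using hy

theorem triangle_subset_Icc_prod (ha : 0 < a) (hb : 0 < b) :
    triangle a b ⊆ Icc 0 a ×ˢ Icc 0 b := by
  rintro ⟨u, v⟩ ⟨hu, hv, huv⟩
  have hua : u / a ≤ 1 := by linarith [div_nonneg hv hb.le]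
  have hvb : v / b ≤ 1 := by linarith [div_nonneg hu ha.le]
  exact ⟨⟨hu, (div_le_one ha).1 hua⟩, hv, (div_le_one hb).1 hvb⟩

theorem isCompact_triangle (ha : 0 < a) (hb : 0 < b) : IsCompact (triangle a b) := by
  refine (isCompact_Icc.prod isCompact_Icc).of_isClosed_subset ?_ (triangle_subset_Icc_prod ha hb)
  simp only [triangle, ofPred_and]
  apply_rules [IsClosed.inter, isClosed_le] <;> fun_prop

theorem swap_mem_triangle {p : ℝ × ℝ} : p.swap ∈ triangle b a ↔ p ∈ triangle a b := by
  simp only [triangle, mem_ofPred_eq, Prod.fst_swap, Prod.snd_swap, add_comm (p.2 / b)]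
  tauto

theorem exists_mem_segment_hypotenuse (ha : 0 < a) (hb : 0 < b) {p : ℝ × ℝ}
    (hp : p ∈ triangle a b) :
    ∃ q ∈ segment ℝ (a, 0) (0, b), p ∈ segment ℝ (p.1, 0) q := by
  obtain ⟨u, v⟩ := p
  obtain ⟨hu, hv, huv⟩ := hp
  have hvb : v / b ≤ 1 - u / a := by linarith
  have hvw : v ≤ b * (1 - u / a) := (div_le_iff₀' hb).1 hvb
  have hua : 0 ≤ 1 - u / a := (div_nonneg hv hb.le).trans hvb
  refine ⟨(u, b * (1 - u / a)), ⟨u / a, 1 - u / a, div_nonneg hu ha.le, hua, by ring, ?_⟩, ?_⟩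
  · ext <;> simp [mul_div_cancel₀ _ ha.ne', mul_comm]
  · rw [← Prod.image_mk_segment_right, segment_eq_Icc (hv.trans hvw)]
    exact ⟨v, ⟨hv, hvw⟩, rfl⟩

theorem ConvexOn.le_max_of_mem_triangle {f : ℝ × ℝ → ℝ} (ha : 0 < a) (hb : 0 < b)
    (hf : ConvexOn ℝ (triangle a b) f) {p : ℝ × ℝ} (hp : p ∈ triangle a b) :
    f p ≤ max (f (p.1, 0)) (max (f (a, 0)) (f (0, b))) := by
  obtain ⟨q, hq, hpq⟩ := exists_mem_segment_hypotenuse ha hb hp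
  have hA : (a, 0) ∈ triangle a b := mk_zero_mem_triangle ha (right_mem_Icc.2 ha.le)
  have hB : (0, b) ∈ triangle a b := zero_mk_mem_triangle hb (right_mem_Icc.2 hb.le)
  have hq_le := hf.le_on_segment hA hB hq
  have hp_le := hf.le_on_segment (mk_zero_mem_triangle ha (triangle_subset_Icc_prod ha hb hp).1)
    (hf.1.segment_subset hA hB hq) hpq
  exact hp_le.trans (max_le_max le_rfl hq_le)

theorem sq_le_mul_add_sq {x g h M : ℝ} (hx : 0 ≤ x) (hg : 0 ≤ g) (hh : 0 ≤ h)
    (hxg : x ≤ max g M) (hxh : x ≤ max h M) : x ^ 2 ≤ g * h + M ^ 2 := by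
  rcases le_or_gt x M with hxM | hMx
  · nlinarith [mul_nonneg hg hh]
  · have hxg' : x ≤ g := by simpa [hMx.not_ge] using hxg
    have hxh' : x ≤ h := by simpa [hMx.not_ge] using hxh
    nlinarith [mul_le_mul hxg' hxh' hx hg]

theorem ConvexOn.sq_le_of_mem_triangle {f : ℝ × ℝ → ℝ} (ha : 0 < a) (hb : 0 < b)
    (hf : ConvexOn ℝ (triangle a b) f) (hf0 : ∀ p ∈ triangle a b, 0 ≤ f p) {p : ℝ × ℝ}
    (hp : p ∈ triangle a b) :
    f p ^ 2 ≤ f (p.1, 0) * f (0, p.2) + max (f (a, 0)) (f (0, b)) ^ 2 := by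
  have hf' : ConvexOn ℝ (triangle b a) (f ∘ Prod.swap) := by
    have hpre : (LinearEquiv.prodComm ℝ ℝ ℝ).toLinearMap ⁻¹' triangle a b = triangle b a :=
      Set.ext fun _ => swap_mem_triangle
    exact hpre ▸ hf.comp_linearMap _
  have hle_snd : f p ≤ max (f (0, p.2)) (max (f (a, 0)) (f (0, b))) := by
    simpa [max_comm (f (a, 0))] using hf'.le_max_of_mem_triangle hb ha (swap_mem_triangle.2 hp)
  obtain ⟨hx, hy⟩ := triangle_subset_Icc_prod ha hb hp
  exact sq_le_mul_add_sq (hf0 p hp) (hf0 _ (mk_zero_mem_triangle ha hx))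
    (hf0 _ (zero_mk_mem_triangle hb hy)) (hf.le_max_of_mem_triangle ha hb hp) hle_snd

theorem setIntegral_le_integral_mul_integral_add {α β : Type*} [MeasurableSpace α]
    [MeasurableSpace β] {μ : Measure α} {ν : Measure β} [SFinite μ] [SFinite ν]
    {S : Set (α × β)} {s : Set α} {t : Set β} (hSm : MeasurableSet S) (hS : S ⊆ s ×ˢ t)
    (hs : MeasurableSet s) (ht : MeasurableSet t) (hμs : μ s ≠ ⊤) (hνt : ν t ≠ ⊤)
    {F : α × β → ℝ} {g : α → ℝ} {h : β → ℝ} {c : ℝ} (hF : IntegrableOn F S (μ.prod ν))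
    (hg : IntegrableOn g s μ) (hh : IntegrableOn h t ν)
    (hg0 : ∀ x ∈ s, 0 ≤ g x) (hh0 : ∀ y ∈ t, 0 ≤ h y) (hc : 0 ≤ c)
    (hFle : ∀ z ∈ S, F z ≤ g z.1 * h z.2 + c) :
    ∫ z in S, F z ∂μ.prod ν ≤
      (∫ x in s, g x ∂μ) * (∫ y in t, h y ∂ν) + c * (μ.real s * ν.real t) := by
  have hprod : IntegrableOn (fun z : α × β => g z.1 * h z.2) (s ×ˢ t) (μ.prod ν) := by
    rw [IntegrableOn, ← Measure.prod_restrict]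
    exact hg.mul_prod hh
  have hconst : IntegrableOn (fun _ => c) (s ×ˢ t) (μ.prod ν) := by
    refine integrableOn_const ?_
    rw [Measure.prod_prod]
    exact ENNReal.mul_ne_top hμs hνt
  calc ∫ z in S, F z ∂μ.prod ν ≤ ∫ z in S, (g z.1 * h z.2 + c) ∂μ.prod ν :=
        setIntegral_mono_on hF ((hprod.add hconst).mono_set hS) hSm hFle
    _ ≤ ∫ z in s ×ˢ t, (g z.1 * h z.2 + c) ∂μ.prod ν := by
        refine setIntegral_mono_set (hprod.add hconst) ?_ hS.eventuallyLE
        refine ae_restrict_of_forall_mem (hs.prod ht) fun z hz => ?_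
        have := mul_nonneg (hg0 _ hz.1) (hh0 _ hz.2)
        simp only [Pi.zero_apply]
        positivity
    _ = (∫ x in s, g x ∂μ) * (∫ y in t, h y ∂ν) + c * (μ.real s * ν.real t) := by
        rw [integral_add hprod hconst, setIntegral_prod_mul, setIntegral_const,
          measureReal_prod_prod, smul_eq_mul]
        ring

theorem sqrt_le_add_add_sqrt_mul_mul {I A B M x y : ℝ} (hA : 0 ≤ A) (hB : 0 ≤ B) (hM : 0 ≤ M)
    (hxy : 0 ≤ x * y) (hI : I ≤ A * B + M ^ 2 * (x * y)) : √I ≤ A + B + √(x * y) * M := by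
  have hs := Real.sq_sqrt hxy
  rw [Real.sqrt_le_iff]
  refine ⟨by positivity, hI.trans ?_⟩
  nlinarith [mul_nonneg hA hB,
    mul_nonneg (add_nonneg hA hB) (mul_nonneg (Real.sqrt_nonneg (x * y)) hM)]

theorem stmt_1 :
    ∃ C : ℝ, 0 < C ∧ ∀ (a b : ℝ), 0 < a → 0 < b →
      ∀ f : ℝ × ℝ → ℝ,
        ContinuousOn f {p : ℝ × ℝ | 0 ≤ p.1 ∧ 0 ≤ p.2 ∧ p.1 / a + p.2 / b ≤ 1} →
        ConvexOn ℝ {p : ℝ × ℝ | 0 ≤ p.1 ∧ 0 ≤ p.2 ∧ p.1 / a + p.2 / b ≤ 1} f →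
        (∀ p ∈ {p : ℝ × ℝ | 0 ≤ p.1 ∧ 0 ≤ p.2 ∧ p.1 / a + p.2 / b ≤ 1}, 0 ≤ f p) →
        AntitoneOn (fun x => f (x, 0)) (Icc 0 a) →
        AntitoneOn (fun y => f (0, y)) (Icc 0 b) →
        Real.sqrt (∫ p in {p : ℝ × ℝ | 0 ≤ p.1 ∧ 0 ≤ p.2 ∧ p.1 / a + p.2 / b ≤ 1},
            (f p) ^ 2) ≤
          C * ((∫ x in Icc (0:ℝ) a, f (x, 0)) + (∫ y in Icc (0:ℝ) b, f (0, y)) +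
               Real.sqrt (a * b) * max (f (a, 0)) (f (0, b))) := by
  refine ⟨1, one_pos, fun a b ha hb f hfc hfx hf0 _ _ => ?_⟩
  have hg0 : ∀ x ∈ Icc 0 a, 0 ≤ f (x, 0) := fun _ hx => hf0 _ (mk_zero_mem_triangle ha hx)
  have hh0 : ∀ y ∈ Icc 0 b, 0 ≤ f (0, y) := fun _ hy => hf0 _ (zero_mk_mem_triangle hb hy)
  have hgc : ContinuousOn (fun x => f (x, 0)) (Icc 0 a) :=
    hfc.comp (by fun_prop) fun _ hx => mk_zero_mem_triangle ha hx
  have hhc : ContinuousOn (fun y => f (0, y)) (Icc 0 b) :=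
    hfc.comp (by fun_prop) fun _ hy => zero_mk_mem_triangle hb hy
  have hint := setIntegral_le_integral_mul_integral_add (μ := volume) (ν := volume)
    (F := fun p => f p ^ 2) (isCompact_triangle ha hb).isClosed.measurableSet
    (triangle_subset_Icc_prod ha hb)
    measurableSet_Icc measurableSet_Icc measure_Icc_lt_top.ne measure_Icc_lt_top.ne
    ((hfc.pow 2).integrableOn_compact (isCompact_triangle ha hb))
    (hgc.integrableOn_compact isCompact_Icc) (hhc.integrableOn_compact isCompact_Icc)
    hg0 hh0 (sq_nonneg _) fun p hp => hfx.sq_le_of_mem_triangle ha hb hf0 hp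
  rw [← Measure.volume_eq_prod, Real.volume_real_Icc_of_le ha.le,
    Real.volume_real_Icc_of_le hb.le, sub_zero, sub_zero] at hint
  rw [one_mul]
  exact sqrt_le_add_add_sqrt_mul_mul (setIntegral_nonneg measurableSet_Icc hg0)
    (setIntegral_nonneg measurableSet_Icc hh0)
    (le_max_of_le_left (hg0 a (right_mem_Icc.2 ha.le))) (mul_pos ha hb).le hint
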